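/- Let CL be a conic-line arrangement of n lines and k conics in ℂP² with only ordinary singularities, t_{n+k} = 0, and n + k ≥ 4. Suppose all n lines pass through a common point p_1. Then the Levi graph H of CL has an induced cycle of length 6. -/

import Mathlib

/-- The Levi graph of an arrangement of curves `C : ι → Set P` with singular points `S`:
the bipartite incidence graph between singular points and curves. -/
def leviGraph {P ι : Type*} (C : ι → Set P) (S : Finset P) :
    SimpleGraph ({p // p ∈ S} ⊕ ι) :=
  SimpleGraph.fromRel (fun u v => ∃ (p : {p // p ∈ S}) (i : ι),
    u = Sum.inl p ∧ v = Sum.inr i ∧ (p : P) ∈ C i)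

/-!
Three curves `A, B, D` with singular points `q ∈ A ∩ B`, `r ∈ A ∩ D`, `s ∈ B ∩ D`, each off
the third curve, span an induced 6-cycle `q A r D s B` in the Levi graph. With two lines
through `p₁`, take for `D` a conic missing `p₁` (one exists since `t_{n+k} = 0`): the lines
meet only at `p₁`, so any of their points on `D` will do. With at most one line, take a point
`x` on two curves `A, B` and a conic `D` missing it; as `|A ∩ B| ≤ |A ∩ D|, |B ∩ D|`, neither
`A ∩ D` nor `B ∩ D` is contained in `A ∩ B`.
-/

def IsTriangle {P : Type*} (A B D : Set P) : Prop :=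
  (∃ q ∈ A ∩ B, q ∉ D) ∧ (∃ r ∈ A ∩ D, r ∉ B) ∧ (∃ s ∈ B ∩ D, s ∉ A)

section IsTriangle

variable {P : Type*} {A B D : Set P}

theorem isTriangle_of_inter_ncard_eq_one {p : P} (hAB : (A ∩ B).ncard = 1) (hp : p ∈ A ∩ B)
    (hpD : p ∉ D) (hAD : (A ∩ D).Nonempty) (hBD : (B ∩ D).Nonempty) : IsTriangle A B D := by
  obtain ⟨a, ha⟩ := Set.ncard_eq_one.1 hAB
  have hAB_eq_p : ∀ y ∈ A ∩ B, y = p := fun y hy => by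
    rw [ha] at hy hp
    exact hy.trans hp.symm
  obtain ⟨r, hrA, hrD⟩ := hAD
  obtain ⟨s, hsB, hsD⟩ := hBD
  refine ⟨⟨p, hp, hpD⟩, ⟨r, ⟨hrA, hrD⟩, fun hrB => ?_⟩, ⟨s, ⟨hsB, hsD⟩, fun hsA => ?_⟩⟩
  · exact hpD (hAB_eq_p r ⟨hrA, hrB⟩ ▸ hrD)
  · exact hpD (hAB_eq_p s ⟨hsA, hsB⟩ ▸ hsD)

theorem Set.exists_mem_notMem_of_ncard_le_of_mem_notMem {s t : Set P} (hs : s.Finite)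
    (hst : s.ncard ≤ t.ncard) {x : P} (hxs : x ∈ s) (hxt : x ∉ t) : ∃ y ∈ t, y ∉ s := by
  by_contra! hts
  exact hxt ((Set.eq_of_subset_of_ncard_le hts hst hs) ▸ hxs)

theorem isTriangle_of_ncard_le (hAB : (A ∩ B).Finite) (hAD : (A ∩ B).ncard ≤ (A ∩ D).ncard)
    (hBD : (A ∩ B).ncard ≤ (B ∩ D).ncard) {x : P} (hx : x ∈ A ∩ B) (hxD : x ∉ D) :
    IsTriangle A B D := by
  obtain ⟨r, hr, hrAB⟩ :=
    Set.exists_mem_notMem_of_ncard_le_of_mem_notMem hAB hAD hx fun h => hxD h.2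
  obtain ⟨s, hs, hsAB⟩ :=
    Set.exists_mem_notMem_of_ncard_le_of_mem_notMem hAB hBD hx fun h => hxD h.2
  exact ⟨⟨x, hx, hxD⟩, ⟨r, hr, fun hrB => hrAB ⟨hr.1, hrB⟩⟩,
    ⟨s, hs, fun hsA => hsAB ⟨hsA, hs.1⟩⟩⟩

theorem exists_isTriangle_of_ncard_inter_eq {k m : ℕ} {Q : Fin k → Set P} (hk : 2 ≤ k)
    (hm : m ≠ 0) (hQQ : ∀ i j, i ≠ j → (Q i ∩ Q j).ncard = m) (hQ : ∀ p, ∃ j, p ∉ Q j) :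
    ∃ a b c, IsTriangle (Q a) (Q b) (Q c) := by
  obtain ⟨i₀, i₁, h01⟩ : ∃ i₀ i₁ : Fin k, i₀ ≠ i₁ := ⟨⟨0, by omega⟩, ⟨1, by omega⟩, by simp⟩
  have hQ01 := hQQ i₀ i₁ h01
  obtain ⟨x, hx⟩ := Set.nonempty_of_ncard_ne_zero (by omega : (Q i₀ ∩ Q i₁).ncard ≠ 0)
  obtain ⟨j, hj⟩ := hQ x
  have h0j : i₀ ≠ j := fun h => hj (h ▸ hx.1)
  have h1j : i₁ ≠ j := fun h => hj (h ▸ hx.2)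
  have hQ01_finite : (Q i₀ ∩ Q i₁).Finite := Set.finite_of_ncard_ne_zero (by omega)
  exact ⟨i₀, i₁, j, isTriangle_of_ncard_le hQ01_finite
    (by rw [hQ01, hQQ _ _ h0j]) (by rw [hQ01, hQQ _ _ h1j]) hx hj⟩

end IsTriangle

section leviGraph

variable {P ι : Type*} {C : ι → Set P} {S : Finset P}

@[simp]
theorem leviGraph_adj_inl_inr {p : {p // p ∈ S}} {i : ι} :
    (leviGraph C S).Adj (Sum.inl p) (Sum.inr i) ↔ (p : P) ∈ C i := by
  simp [leviGraph]

@[simp]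
theorem leviGraph_adj_inr_inl {p : {p // p ∈ S}} {i : ι} :
    (leviGraph C S).Adj (Sum.inr i) (Sum.inl p) ↔ (p : P) ∈ C i := by
  rw [SimpleGraph.adj_comm, leviGraph_adj_inl_inr]

@[simp]
theorem leviGraph_not_adj_inl_inl {p q : {p // p ∈ S}} :
    ¬ (leviGraph C S).Adj (Sum.inl p) (Sum.inl q) := by
  simp [leviGraph]

@[simp]
theorem leviGraph_not_adj_inr_inr {i j : ι} : ¬ (leviGraph C S).Adj (Sum.inr i) (Sum.inr j) := by
  simp [leviGraph]

theorem nonempty_cycleGraph_six_embedding_leviGraph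
    (hS : ∀ p a b, a ≠ b → p ∈ C a → p ∈ C b → p ∈ S) {a b c : ι}
    (habc : IsTriangle (C a) (C b) (C c)) :
    Nonempty (SimpleGraph.cycleGraph 6 ↪g leviGraph C S) := by
  obtain ⟨⟨q, ⟨hqa, hqb⟩, hqc⟩, ⟨r, ⟨hra, hrc⟩, hrb⟩, ⟨s, ⟨hsb, hsc⟩, hsa⟩⟩ := habc
  have hab : a ≠ b := fun h => hrb (h ▸ hra)
  have hac : a ≠ c := fun h => hsa (h ▸ hsc)
  have hbc : b ≠ c := fun h => hqc (h ▸ hqb)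
  have hqr : q ≠ r := fun h => hrb (h ▸ hqb)
  have hqs : q ≠ s := fun h => hsa (h ▸ hqa)
  have hrs : r ≠ s := fun h => hsa (h ▸ hra)
  let f : Fin 6 → {p // p ∈ S} ⊕ ι
    | 0 => Sum.inl ⟨q, hS q a b hab hqa hqb⟩
    | 1 => Sum.inr a
    | 2 => Sum.inl ⟨r, hS r a c hac hra hrc⟩
    | 3 => Sum.inr c
    | 4 => Sum.inl ⟨s, hS s b c hbc hsb hsc⟩
    | 5 => Sum.inr b
  refine ⟨⟨⟨f, fun u v huv => ?_⟩, fun {u v} => ?_⟩⟩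
  · fin_cases u <;> fin_cases v <;> simp_all [f]
  · show (leviGraph C S).Adj (f u) (f v) ↔ _
    fin_cases u <;> fin_cases v <;>
      simp [f, SimpleGraph.cycleGraph_adj, hqa, hqb, hqc, hra, hrc, hrb, hsb, hsc, hsa] <;> decide

end leviGraph

theorem leviGraph_conic_line_concurrent_lines_induced_C6 {P : Type*} {n k : ℕ}
    (hnk : 4 ≤ n + k) (L : Fin n → Set P) (Q : Fin k → Set P) (S : Finset P)
    (hS : ∀ p : P, p ∈ S ↔ ∃ a b : Fin n ⊕ Fin k, a ≠ b ∧
        p ∈ Sum.elim L Q a ∧ p ∈ Sum.elim L Q b)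
    (hLL : ∀ i j : Fin n, i ≠ j → (L i ∩ L j).ncard = 1)
    (hLQ : ∀ (i : Fin n) (j : Fin k), (L i ∩ Q j).ncard = 2)
    (hQQ : ∀ i j : Fin k, i ≠ j → (Q i ∩ Q j).ncard = 4)
    (p₁ : P) (hp₁ : ∀ i : Fin n, p₁ ∈ L i)
    (htop : ¬ ∃ p : P, (∀ i : Fin n, p ∈ L i) ∧ ∀ j : Fin k, p ∈ Q j) :
    Nonempty (SimpleGraph.cycleGraph 6 ↪g leviGraph (Sum.elim L Q) S) := by
  push Not at htop
  suffices ∃ a b c, IsTriangle (Sum.elim L Q a) (Sum.elim L Q b) (Sum.elim L Q c) by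
    obtain ⟨a, b, c, habc⟩ := this
    exact nonempty_cycleGraph_six_embedding_leviGraph
      (fun p a b hab ha hb => (hS p).2 ⟨a, b, hab, ha, hb⟩) habc
  have hLQ_nonempty i j : (L i ∩ Q j).Nonempty := Set.nonempty_of_ncard_ne_zero (by simp [hLQ])
  have hLQ_finite i j : (L i ∩ Q j).Finite := Set.finite_of_ncard_ne_zero (by simp [hLQ])
  obtain hn | rfl | rfl : 2 ≤ n ∨ n = 1 ∨ n = 0 := by omega
  · obtain ⟨j, hj⟩ := htop p₁ hp₁
    obtain ⟨i₀, i₁, h01⟩ : ∃ i₀ i₁ : Fin n, i₀ ≠ i₁ := ⟨⟨0, by omega⟩, ⟨1, by omega⟩, by simp⟩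
    exact ⟨.inl i₀, .inl i₁, .inr j, isTriangle_of_inter_ncard_eq_one (hLL i₀ i₁ h01)
      ⟨hp₁ i₀, hp₁ i₁⟩ hj (hLQ_nonempty i₀ j) (hLQ_nonempty i₁ j)⟩
  · obtain ⟨x, hx⟩ := hLQ_nonempty 0 ⟨0, by omega⟩
    obtain ⟨j, hj⟩ := htop x fun i => Subsingleton.elim 0 i ▸ hx.1
    have h0j : (⟨0, by omega⟩ : Fin k) ≠ j := fun h => hj (h ▸ hx.2)
    exact ⟨.inl 0, .inr _, .inr j, isTriangle_of_ncard_le (hLQ_finite _ _)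
      (by simp [hLQ]) (by simp [hLQ, hQQ _ _ h0j]) hx hj⟩
  · obtain ⟨a, b, c, habc⟩ :=
      exists_isTriangle_of_ncard_inter_eq (by omega) (by norm_num) hQQ (htop · finZeroElim)
    exact ⟨.inr a, .inr b, .inr c, habc⟩
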